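/- arXiv:1404.1596 — 6 statements merged into one kernel-verified Lean document; each statement's English description precedes it below -/
import Mathlib

section
/- Let ω be a constant-coefficient presymplectic form on a real normed space E. Let f, g : E → ℝ be twice continuously differentiable with differentiable Hamiltonian vector fields X_f, X_g : E → E. Then the Lie bracket [X_f, X_g] is a Hamiltonian vector field of the function φ(x) := ω(X_g x, X_f x): for all x, w ∈ E, ω([X_f, X_g] x, w) = (fderiv ℝ φ x) w. In particular, Hamiltonian vector fields with respect to ω are closed under the Lie bracket. -/
/-!
Since `ω (X_f y) = df(y)` for every `y`, differentiating once more shows that `ω ∘ DX_f(x)` is the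
Hessian of `f` at `x`, hence symmetric. Expanding `[X_f, X_g] = DX_g X_f - DX_f X_g`, moving the
derivatives into the second slot by this symmetry, and using the antisymmetry of `ω` gives exactly
the Leibniz rule for the derivative of `y ↦ ω (X_g y) (X_f y)`.
-/

open ContinuousLinearMap

section Hamiltonian

variable {E : Type*} [NormedAddCommGroup E] [NormedSpace ℝ E]

def IsHamiltonian (ω : E →L[ℝ] E →L[ℝ] ℝ) (f : E → ℝ) (X : E → E) : Prop :=
  ∀ y, ω (X y) = fderiv ℝ f y

theorem IsHamiltonian.apply_fderiv_comm {ω : E →L[ℝ] E →L[ℝ] ℝ} {f : E → ℝ} {X : E → E} {x : E}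
    (hH : IsHamiltonian ω f X) (hf : ContDiffAt ℝ 2 f x) (hX : DifferentiableAt ℝ X x)
    (v w : E) : ω (fderiv ℝ X x v) w = ω (fderiv ℝ X x w) v := by
  have hHess : fderiv ℝ (fderiv ℝ f) x = ω ∘L fderiv ℝ X x := by
    rw [← funext hH]
    exact (ω.hasFDerivAt.comp x hX.hasFDerivAt).fderiv
  simpa [hHess] using
    hf.isSymmSndFDerivAt (by simp [minSmoothness_of_isRCLikeNormedField]) v w

end Hamiltonian

/-- The Lie bracket of two Hamiltonian vector fields (with respect
to a constant-coefficient presymplectic form) is Hamiltonian, with Hamiltonian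
function `x ↦ ω (X_g x) (X_f x)`. -/
theorem lieBracket_hamiltonian
    {E : Type*} [NormedAddCommGroup E] [NormedSpace ℝ E]
    (ω : E →L[ℝ] E →L[ℝ] ℝ) (halt : ∀ v : E, ω v v = 0)
    (f g : E → ℝ) (hf : ContDiff ℝ 2 f) (hg : ContDiff ℝ 2 g)
    (Xf Xg : E → E) (hXf : Differentiable ℝ Xf) (hXg : Differentiable ℝ Xg)
    (hHf : ∀ x w : E, ω (Xf x) w = fderiv ℝ f x w)
    (hHg : ∀ x w : E, ω (Xg x) w = fderiv ℝ g x w)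
    (x w : E) :
    ω (VectorField.lieBracket ℝ Xf Xg x) w
      = fderiv ℝ (fun y => ω (Xg y) (Xf y)) x w := by
  have hFf : IsHamiltonian ω f Xf := fun y => ext (hHf y)
  have hFg : IsHamiltonian ω g Xg := fun y => ext (hHg y)
  have hanti : ω (fderiv ℝ Xf x w) (Xg x) = -ω (Xg x) (fderiv ℝ Xf x w) :=
    (LinearMap.IsAlt.neg (B := ω.toLinearMap₁₂) halt _ _).symm
  rw [ω.fderiv_of_bilinear (hXg x) (hXf x)]
  simp only [VectorField.lieBracket, map_sub, sub_apply, add_apply, precompR_apply,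
    precompL_apply, compL_apply, comp_apply]
  rw [hFg.apply_fderiv_comm hg.contDiffAt (hXg x), hFf.apply_fderiv_comm hf.contDiffAt (hXf x),
    hanti]
  ring
end

section
/- Let ω be a constant-coefficient presymplectic form on a real normed space E. Let f, g, h : E → ℝ be twice continuously differentiable with differentiable Hamiltonian vector fields X_f, X_g, X_h. Setting {a,b}(x) := (fderiv ℝ a x)(X_b x), the Jacobi identity holds pointwise: (fderiv ℝ {f,g} x)(X_h x) + (fderiv ℝ {g,h} x)(X_f x) + (fderiv ℝ {h,f} x)(X_g x) = 0 for all x ∈ E. -/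
/-!
Since `{f, g} = ω (X_f, X_g)`, differentiating along `X_h` gives
`ω (DX_f · X_h, X_g) + ω (X_f, DX_g · X_h)`. The form `(v, w) ↦ ω (DX_f · v, w)` is the Hessian of
`f`, hence symmetric; with the antisymmetry of `ω`, the six terms of the cyclic sum cancel in pairs.
-/

open ContinuousLinearMap

theorem LinearMap.IsAlt.cyclic_sum_eq_zero {R M N : Type*} [CommSemiring R] [AddCommMonoid M]
    [Module R M] [AddCommGroup N] [Module R N] {ω : M →ₗ[R] M →ₗ[R] N} (hω : ω.IsAlt)
    {A B C : M → M} (hA : ∀ v w, ω (A v) w = ω (A w) v) (hB : ∀ v w, ω (B v) w = ω (B w) v)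
    (hC : ∀ v w, ω (C v) w = ω (C w) v) (a b c : M) :
    ω (A c) b + ω a (B c) + (ω (B a) c + ω b (C a)) + (ω (C b) a + ω c (A b)) = 0 := by
  rw [← hω.neg (B c), hB c, ← hω.neg (C a), hC a, ← hω.neg (A b), hA b]
  abel

theorem ContinuousLinearMap.fderiv_of_bilinear_apply {𝕜 E F G G' : Type*}
    [NontriviallyNormedField 𝕜] [NormedAddCommGroup E] [NormedSpace 𝕜 E]
    [NormedAddCommGroup F] [NormedSpace 𝕜 F]
    [NormedAddCommGroup G] [NormedSpace 𝕜 G] [NormedAddCommGroup G'] [NormedSpace 𝕜 G']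
    (B : E →L[𝕜] F →L[𝕜] G) {f : G' → E} {g : G' → F} {x : G'}
    (hf : DifferentiableAt 𝕜 f x) (hg : DifferentiableAt 𝕜 g x) (v : G') :
    fderiv 𝕜 (fun y => B (f y) (g y)) x v =
      B (fderiv 𝕜 f x v) (g x) + B (f x) (fderiv 𝕜 g x v) := by
  rw [B.fderiv_of_bilinear hf hg, add_apply, add_comm]
  rfl

section

variable {E : Type*} [NormedAddCommGroup E] [NormedSpace ℝ E]

def IsHamiltonianVectorField (ω : E →L[ℝ] E →L[ℝ] ℝ) (f : E → ℝ) (X : E → E) : Prop :=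
  ∀ x w, ω (X x) w = fderiv ℝ f x w

namespace IsHamiltonianVectorField

variable {ω : E →L[ℝ] E →L[ℝ] ℝ} {f : E → ℝ} {X : E → E}

theorem fderiv_eq (hX : IsHamiltonianVectorField ω f X) : fderiv ℝ f = fun x => ω (X x) :=
  funext fun x => ext fun w => (hX x w).symm

theorem fderiv_apply_eq (hX : IsHamiltonianVectorField ω f X) (Y : E → E) :
    (fun y => fderiv ℝ f y (Y y)) = fun y => ω (X y) (Y y) := by
  rw [hX.fderiv_eq]

theorem apply_fderiv_comm (hX : IsHamiltonianVectorField ω f X) (hf : Differentiable ℝ f)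
    {x : E} (hXx : DifferentiableAt ℝ X x) (v w : E) :
    ω (fderiv ℝ X x v) w = ω (fderiv ℝ X x w) v := by
  have hf' : HasFDerivAt (fderiv ℝ f) (ω.comp (fderiv ℝ X x)) x := by
    rw [hX.fderiv_eq]
    exact ω.hasFDerivAt.comp x hXx.hasFDerivAt
  exact second_derivative_symmetric (fun y => (hf y).hasFDerivAt) hf' v w

end IsHamiltonianVectorField

end

/-- Pointwise Jacobi identity for the Poisson bracket
`{a,b}(x) = (fderiv ℝ a x) (X_b x)` associated with a constant-coefficient
presymplectic form. -/
theorem poisson_bracket_jacobi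
    {E : Type*} [NormedAddCommGroup E] [NormedSpace ℝ E]
    (ω : E →L[ℝ] E →L[ℝ] ℝ) (halt : ∀ v : E, ω v v = 0)
    (f g h : E → ℝ) (hf : ContDiff ℝ 2 f) (hg : ContDiff ℝ 2 g)
    (hh : ContDiff ℝ 2 h)
    (Xf Xg Xh : E → E)
    (hXf : Differentiable ℝ Xf) (hXg : Differentiable ℝ Xg)
    (hXh : Differentiable ℝ Xh)
    (hHf : ∀ x w : E, ω (Xf x) w = fderiv ℝ f x w)
    (hHg : ∀ x w : E, ω (Xg x) w = fderiv ℝ g x w)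
    (hHh : ∀ x w : E, ω (Xh x) w = fderiv ℝ h x w)
    (x : E) :
    fderiv ℝ (fun y => fderiv ℝ f y (Xg y)) x (Xh x)
      + fderiv ℝ (fun y => fderiv ℝ g y (Xh y)) x (Xf x)
      + fderiv ℝ (fun y => fderiv ℝ h y (Xf y)) x (Xg x) = 0 := by
  have hHf : IsHamiltonianVectorField ω f Xf := hHf
  have hHg : IsHamiltonianVectorField ω g Xg := hHg
  have hHh : IsHamiltonianVectorField ω h Xh := hHh
  rw [hHf.fderiv_apply_eq, hHg.fderiv_apply_eq, hHh.fderiv_apply_eq,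
    ω.fderiv_of_bilinear_apply (hXf x) (hXg x), ω.fderiv_of_bilinear_apply (hXg x) (hXh x),
    ω.fderiv_of_bilinear_apply (hXh x) (hXf x)]
  exact LinearMap.IsAlt.cyclic_sum_eq_zero (ω := ω.toLinearMap₁₂) halt
    (hHf.apply_fderiv_comm (hf.differentiable two_ne_zero) (hXf x))
    (hHg.apply_fderiv_comm (hg.differentiable two_ne_zero) (hXg x))
    (hHh.apply_fderiv_comm (hh.differentiable two_ne_zero) (hXh x)) _ _ _
end

section
/- Let ω be a constant-coefficient presymplectic form on a real normed space E. Let Y : E → E be a differentiable Hamiltonian vector field of some twice continuously differentiable function h, and let Z : E → E be a differentiable map taking values in the kernel of ω, i.e. ω(Z x, w) = 0 for all x, w ∈ E. Then the Lie bracket [Y, Z] also takes values in the kernel of ω: ω([Y, Z] x, w) = 0 for all x, w ∈ E. -/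
/-!
Write `ω(Y x) = dh(x)`. Differentiating, `ω(DY(x) u, v) = D²h(x)(u, v)`, so by symmetry of the
second derivative `DY(x)` is `ω`-symmetric; for `v ∈ ker ω` this gives
`ω(DY(x) v, w) = ω(DY(x) w, v) = -ω(v, DY(x) w) = 0`, i.e. `DY(x)` preserves `ker ω`. Differentiating
`ω(Z x) = 0` shows that `DZ(x)` takes values in `ker ω`. Hence both terms of
`[Y, Z](x) = DZ(x)(Y x) - DY(x)(Z x)` lie in `ker ω`.
-/

namespace ContinuousLinearMap

variable {𝕜 : Type*} [NontriviallyNormedField 𝕜]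
  {E : Type*} [NormedAddCommGroup E] [NormedSpace 𝕜 E]
  {F : Type*} [NormedAddCommGroup F] [NormedSpace 𝕜 F]
  {G : Type*} [NormedAddCommGroup G] [NormedSpace 𝕜 G]

theorem apply_fderiv (L : F →L[𝕜] G) {f : E → F} {x : E}
    (hf : DifferentiableAt 𝕜 f x) (v : E) :
    L (fderiv 𝕜 f x v) = fderiv 𝕜 (fun y => L (f y)) x v := by
  rw [show fderiv 𝕜 (fun y => L (f y)) x = L.comp (fderiv 𝕜 f x) from
    (L.hasFDerivAt.comp x hf.hasFDerivAt).fderiv]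
  rfl

theorem apply_fderiv_eq_zero_of_forall_apply_eq_zero {L : F →L[𝕜] G} {Z : E → F} {x : E}
    (hZ : DifferentiableAt 𝕜 Z x) (hLZ : ∀ y, L (Z y) = 0) (v : E) :
    L (fderiv 𝕜 Z x v) = 0 := by
  rw [L.apply_fderiv hZ, funext hLZ, fderiv_const_apply]
  rfl

variable {ω : E →L[𝕜] E →L[𝕜] F} {h : E → F} {Y : E → E} {x : E}

theorem apply_fderiv_comm_of_hamiltonian (hHam : ∀ y, ω (Y y) = fderiv 𝕜 h y)
    (hY : DifferentiableAt 𝕜 Y x) (hh : IsSymmSndFDerivAt 𝕜 h x) (u v : E) :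
    ω (fderiv 𝕜 Y x u) v = ω (fderiv 𝕜 Y x v) u := by
  rw [ω.apply_fderiv hY, ω.apply_fderiv hY, funext hHam]
  exact hh u v

theorem fderiv_apply_eq_zero_of_hamiltonian (hω : ω.toLinearMap₁₂.IsAlt)
    (hHam : ∀ y, ω (Y y) = fderiv 𝕜 h y) (hY : DifferentiableAt 𝕜 Y x)
    (hh : IsSymmSndFDerivAt 𝕜 h x) {v : E} (hv : ω v = 0) :
    ω (fderiv 𝕜 Y x v) = 0 := by
  ext w
  rw [apply_fderiv_comm_of_hamiltonian hHam hY hh]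
  exact hω.eq_iff.mp (DFunLike.congr_fun hv _)

theorem lieBracket_eq_zero_of_hamiltonian (hω : ω.toLinearMap₁₂.IsAlt)
    (hHam : ∀ y, ω (Y y) = fderiv 𝕜 h y) (hY : DifferentiableAt 𝕜 Y x)
    (hh : IsSymmSndFDerivAt 𝕜 h x) {Z : E → E} (hZ : DifferentiableAt 𝕜 Z x)
    (hker : ∀ y, ω (Z y) = 0) :
    ω (VectorField.lieBracket 𝕜 Y Z x) = 0 := by
  rw [VectorField.lieBracket, map_sub, apply_fderiv_eq_zero_of_forall_apply_eq_zero hZ hker,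
    fderiv_apply_eq_zero_of_hamiltonian hω hHam hY hh (hker x), sub_zero]

end ContinuousLinearMap

/-- The kernel of a constant-coefficient presymplectic form is
stable under the Lie bracket with Hamiltonian vector fields. -/
theorem kernel_stable_under_hamiltonian
    {E : Type*} [NormedAddCommGroup E] [NormedSpace ℝ E]
    (ω : E →L[ℝ] E →L[ℝ] ℝ) (halt : ∀ v : E, ω v v = 0)
    (h : E → ℝ) (hh : ContDiff ℝ 2 h)
    (Y : E → E) (hY : Differentiable ℝ Y)
    (hHam : ∀ x w : E, ω (Y x) w = fderiv ℝ h x w)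
    (Z : E → E) (hZ : Differentiable ℝ Z)
    (hker : ∀ x w : E, ω (Z x) w = 0) :
    ∀ x w : E, ω (VectorField.lieBracket ℝ Y Z x) w = 0 := by
  intro x w
  have hω : ω.toLinearMap₁₂.IsAlt := halt
  have hHam' : ∀ y, ω (Y y) = fderiv ℝ h y := fun y => ContinuousLinearMap.ext (hHam y)
  have hker' : ∀ y, ω (Z y) = 0 := fun y => ContinuousLinearMap.ext (hker y)
  have hsymm : IsSymmSndFDerivAt ℝ h x := hh.contDiffAt.isSymmSndFDerivAt (by simp)
  have hbracket := ω.lieBracket_eq_zero_of_hamiltonian hω hHam' (hY x) hsymm (hZ x) hker'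
  exact DFunLike.congr_fun hbracket w
end

section
/- Define vector fields on ℝ⁴ by X₁(x) = (1,1,1,1), X₂(x) = x, and X₃(x) = (x₁², x₂², x₃², x₄²). Then, for every x ∈ ℝ⁴, [X₁,X₂](x) = X₁(x), [X₁,X₃](x) = 2 • X₂(x), and [X₂,X₃](x) = X₃(x). Hence X₁, X₂, X₃ span a Vessiot–Guldberg Lie algebra isomorphic to sl(2,ℝ) for the system of four coupled Riccati equations dxᵢ/dt = a(t) + b(t)xᵢ + c(t)xᵢ². -/
/-! A constant vector field has zero derivative, so `[c, W](x) = DW(x) c`. In a commutative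
normed algebra the derivative of `y ↦ y²` at `x` is `v ↦ 2xv`, and the three brackets follow;
`ℝ⁴` is such an algebra under pointwise multiplication, where the fields are `1`, `id` and `y ↦ y²`. -/

open VectorField

section ConstantField

variable {𝕜 E : Type*} [NontriviallyNormedField 𝕜] [NormedAddCommGroup E] [NormedSpace 𝕜 E]

theorem VectorField.lieBracket_const_left (c : E) (W : E → E) (x : E) :
    lieBracket 𝕜 (fun _ ↦ c) W x = fderiv 𝕜 W x c := by
  simp [lieBracket_eq]

theorem VectorField.lieBracket_const_id (c x : E) :
    lieBracket 𝕜 (fun _ ↦ c) id x = c := by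
  simp [lieBracket_const_left]

end ConstantField

section Riccati

variable {𝕜 A : Type*} [NontriviallyNormedField 𝕜] [NormedCommRing A] [NormedAlgebra 𝕜 A]

theorem fderiv_sq_apply (x v : A) : fderiv 𝕜 (fun y : A ↦ y ^ 2) x v = (2 : 𝕜) • (x * v) := by
  simp [fderiv_pow_ring, two_smul, ofNat_smul_eq_nsmul, add_mul]

theorem VectorField.lieBracket_const_sq (c x : A) :
    lieBracket 𝕜 (fun _ ↦ c) (fun y : A ↦ y ^ 2) x = (2 : 𝕜) • (x * c) := by
  rw [lieBracket_const_left, fderiv_sq_apply]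

theorem VectorField.lieBracket_id_sq (x : A) :
    lieBracket 𝕜 id (fun y : A ↦ y ^ 2) x = x ^ 2 := by
  simp only [lieBracket_eq, fderiv_sq_apply, fderiv_id, id, ContinuousLinearMap.id_apply]
  rw [two_smul, sq, add_sub_cancel_right]

end Riccati

/-- The vector fields `X₁ = Σ ∂/∂xᵢ`, `X₂ = Σ xᵢ ∂/∂xᵢ`,
`X₃ = Σ xᵢ² ∂/∂xᵢ` on `ℝ⁴` satisfy the `sl(2,ℝ)` commutation relations
`[X₁,X₂] = X₁`, `[X₁,X₃] = 2X₂`, `[X₂,X₃] = X₃`. -/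
theorem riccati_vessiot_guldberg_sl2 :
    ∀ x : Fin 4 → ℝ,
      VectorField.lieBracket ℝ (fun _ : Fin 4 → ℝ => fun _ : Fin 4 => (1 : ℝ))
        (fun y : Fin 4 → ℝ => y) x = (fun _ : Fin 4 => (1 : ℝ)) ∧
      VectorField.lieBracket ℝ (fun _ : Fin 4 → ℝ => fun _ : Fin 4 => (1 : ℝ))
        (fun y : Fin 4 → ℝ => fun i => (y i) ^ 2) x = (2 : ℝ) • x ∧
      VectorField.lieBracket ℝ (fun y : Fin 4 → ℝ => y)
        (fun y : Fin 4 → ℝ => fun i => (y i) ^ 2) x = fun i => (x i) ^ 2 := by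
  intro x
  refine ⟨lieBracket_const_id _ x, ?_, lieBracket_id_sq x⟩
  exact (lieBracket_const_sq (1 : Fin 4 → ℝ) x).trans (by rw [mul_one])
end

section
/- For p = (x,v,a) ∈ ℝ³ with v ≠ 0, let ω₁(p) and ω₂(p) be the alternating bilinear forms on ℝ³ given by ω₁(p)(u,w) = (u₂w₃ − u₃w₂)/v³ and ω₂(p)(u,w) = −(2/v³)(x(u₂w₃ − u₃w₂) + v(u₃w₁ − u₁w₃) + a(u₁w₂ − u₂w₁)). Then their common kernel is trivial: if u ∈ ℝ³ satisfies ω₁(p)(u,w) = 0 and ω₂(p)(u,w) = 0 for all w ∈ ℝ³, then u = 0. Hence (ω₁, ω₂) is a two-symplectic structure on O₂ = {(x,v,a) : v ≠ 0}. -/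
/-- The pointwise two-forms
`ω₁(p)(u,w) = (u₂w₃ − u₃w₂)/v³` and
`ω₂(p)(u,w) = −(2/v³)(x(u₂w₃ − u₃w₂) + v(u₃w₁ − u₁w₃) + a(u₁w₂ − u₂w₁))`
on `ℝ³` (coordinates `(x,v,a) = (p 0, p 1, p 2)`, zero-based indices for
`u, w`) have trivial common kernel at every point of
`O₂ = {(x,v,a) : v ≠ 0}`. -/
theorem schwarzian_two_symplectic_trivial_kernel
    (p : Fin 3 → ℝ) (hv : p 1 ≠ 0) (u : Fin 3 → ℝ)
    (h1 : ∀ w : Fin 3 → ℝ, (u 1 * w 2 - u 2 * w 1) / (p 1) ^ 3 = 0)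
    (h2 : ∀ w : Fin 3 → ℝ,
      -(2 / (p 1) ^ 3) * (p 0 * (u 1 * w 2 - u 2 * w 1)
        + p 1 * (u 2 * w 0 - u 0 * w 2)
        + p 2 * (u 0 * w 1 - u 1 * w 0)) = 0) :
    u = 0 := by
  have hv3 : p 1 ^ 3 ≠ 0 := pow_ne_zero 3 hv
  have hu1 : u 1 = 0 := by simpa [hv3] using h1 ![0, 0, 1]
  have hu2 : u 2 = 0 := by simpa [hv3] using h1 ![0, 1, 0]
  -- `ker ω₁` is the `x`-axis, on which `ω₂` pairs nontrivially with `∂ₐ` through its `v da ∧ dx` term.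
  have hu0 : u 0 = 0 := by simpa [hu1, hu2, hv, hv3] using h2 ![0, 0, 1]
  ext i
  fin_cases i
  exacts [hu0, hu1, hu2]
end

section
/- Let Y₁(x,v,a) = (0,0,2v), Y₂(x,v,a) = (0,v,2a), Y₃(x,v,a) = (v,a,3a²/(2v)) on O₂ = {(x,v,a) ∈ ℝ³ : v ≠ 0}, and let ω₁(p)(u,w) = (u₂w₃ − u₃w₂)/v³ at p = (x,v,a). Then Y₁, Y₂, Y₃ are Hamiltonian with respect to ω₁ with Hamiltonian functions h¹(x,v,a) = 2/v, h²(x,v,a) = a/v², h³(x,v,a) = a²/(2v³): for every p ∈ O₂ and every w ∈ ℝ³, ω₁(p)(Y_α(p), w) = (fderiv ℝ h^α p) w for α = 1, 2, 3. -/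
noncomputable def schwarzY₁ : (Fin 3 → ℝ) → (Fin 3 → ℝ) :=
  fun p => ![0, 0, 2 * p 1]

noncomputable def schwarzY₂ : (Fin 3 → ℝ) → (Fin 3 → ℝ) :=
  fun p => ![0, p 1, 2 * p 2]

noncomputable def schwarzY₃ : (Fin 3 → ℝ) → (Fin 3 → ℝ) :=
  fun p => ![p 1, p 2, 3 * (p 2) ^ 2 / (2 * p 1)]

/-- The first presymplectic form of the two-symplectic structure of the
Schwarzian equation: `ω₁(p)(u,w) = (u₂w₃ − u₃w₂)/v³` in coordinates
`(x,v,a) = (p 0, p 1, p 2)`. -/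
noncomputable def schwarzOmega₁ (p : Fin 3 → ℝ) (u w : Fin 3 → ℝ) : ℝ :=
  (u 1 * w 2 - u 2 * w 1) / (p 1) ^ 3

theorem HasFDerivAt.div {E : Type*} [NormedAddCommGroup E] [NormedSpace ℝ E] {f g : E → ℝ}
    {f' g' : E →L[ℝ] ℝ} {p : E} (hf : HasFDerivAt f f' p) (hg : HasFDerivAt g g' p)
    (hp : g p ≠ 0) :
    HasFDerivAt (fun q => f q / g q) ((g p ^ 2)⁻¹ • (g p • f' - f p • g')) p := by
  simp_rw [div_eq_mul_inv]
  refine (hf.mul ((hasDerivAt_inv hp).comp_hasFDerivAt p hg)).congr_fderiv ?_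
  ext w
  simp only [add_apply, smul_apply, sub_apply, neg_apply, Function.comp_apply, neg_smul, smul_neg,
    smul_eq_mul]
  field_simp
  ring

/-- `Y₁, Y₂, Y₃` are Hamiltonian with respect to `ω₁` with the
Hamiltonian functions `h¹ = 2/v`, `h² = a/v²`, `h³ = a²/(2v³)`. -/
theorem schwarzian_hamiltonian_functions_omega1 :
    ∀ p : Fin 3 → ℝ, p 1 ≠ 0 → ∀ w : Fin 3 → ℝ,
      schwarzOmega₁ p (schwarzY₁ p) w
        = fderiv ℝ (fun q : Fin 3 → ℝ => 2 / q 1) p w ∧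
      schwarzOmega₁ p (schwarzY₂ p) w
        = fderiv ℝ (fun q : Fin 3 → ℝ => q 2 / (q 1) ^ 2) p w ∧
      schwarzOmega₁ p (schwarzY₃ p) w
        = fderiv ℝ (fun q : Fin 3 → ℝ => (q 2) ^ 2 / (2 * (q 1) ^ 3)) p w := by
  intro p hp w
  have hv := hasFDerivAt_apply (𝕜 := ℝ) 1 p
  have ha := hasFDerivAt_apply (𝕜 := ℝ) 2 p
  rw [((hasFDerivAt_const 2 p).div hv hp).fderiv,
    (ha.div (hv.pow 2) (pow_ne_zero 2 hp)).fderiv,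
    ((ha.pow 2).div ((hv.pow 3).const_mul 2) (by positivity)).fderiv]
  refine ⟨?_, ?_, ?_⟩ <;>
  · simp only [schwarzOmega₁, schwarzY₁, schwarzY₂, schwarzY₃, Matrix.cons_val_zero,
      Matrix.cons_val_one, Matrix.cons_val, smul_apply, sub_apply, zero_apply,
      ContinuousLinearMap.proj_apply, Nat.add_one_sub_one, pow_one, nsmul_eq_mul, Nat.cast_ofNat,
      smul_eq_mul, zero_mul, mul_zero, zero_sub]
    field_simp
end
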